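/- Let f : 2^N → ℝ be a monotone submodular function, let S ⊆ N, let r be a positive integer dividing k, let X ⊆ N with |X| ≥ k/r, let τ ≥ 0, and let X' ⊆ X be such that E_{R∼U(X)}[f_{S∪(R\{a})}(a)] ≥ τ for every a ∈ X'. Then E_{R∼U(X)}[f_S(R)] ≥ E_{R∼U(X)}[f_S(R ∩ X')] ≥ |X'| · (k/(r·|X|)) · τ. -/

import Mathlib

open Finset

lemma telescope {α : Type*} [DecidableEq α] (f : Finset α → ℝ)
    (hsub : ∀ A B : Finset α, A ⊆ B → ∀ a ∉ B,
      f (insert a B) - f B ≤ f (insert a A) - f A)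
    (S R : Finset α) :
    ∀ T : Finset α, T ⊆ R → (∀ a ∈ T, a ∉ S) →
      ∑ a ∈ T, (f (insert a (S ∪ R.erase a)) - f (S ∪ R.erase a)) ≤ f (S ∪ T) - f S := by
  intro T
  induction T using Finset.induction_on with
  | empty => intro _ _; simp
  | @insert b T' hb ih =>
    intro hTR hTS
    rw [Finset.sum_insert hb]
    have h1 : f (insert b (S ∪ R.erase b)) - f (S ∪ R.erase b)
        ≤ f (insert b (S ∪ T')) - f (S ∪ T') := by
      apply hsub
      · apply Finset.union_subset_union_right
        rw [Finset.subset_erase]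
        exact ⟨fun x hx => hTR (Finset.mem_insert_of_mem hx), hb⟩
      · rw [Finset.mem_union]
        rintro (h | h)
        · exact hTS b (Finset.mem_insert_self b T') h
        · exact (Finset.notMem_erase b R) h
    have h2 := ih (fun x hx => hTR (Finset.mem_insert_of_mem hx))
      (fun a ha => hTS a (Finset.mem_insert_of_mem ha))
    have : S ∪ insert b T' = insert b (S ∪ T') := by
      rw [Finset.union_insert]
    rw [this]
    linarith


lemma dc {α : Type*} [DecidableEq α] (Y : Finset α) (t : ℕ) (ht : 1 ≤ t) (h : Finset α → ℝ)
    (hmono : ∀ Q ∈ powersetCard t Y, ∀ x ∈ Q, h Q ≤ h (Q.erase x)) :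
    (t : ℝ) * ∑ R ∈ powersetCard t Y, h R
      ≤ ((Y.card - (t - 1) : ℕ) : ℝ) * ∑ Q ∈ powersetCard (t - 1) Y, h Q := by
  have lhs : (t : ℝ) * ∑ R ∈ powersetCard t Y, h R
      = ∑ R ∈ powersetCard t Y, ∑ x ∈ R, h R := by
    rw [Finset.mul_sum]
    apply Finset.sum_congr rfl
    intro R hR
    rw [Finset.sum_const, nsmul_eq_mul, (Finset.mem_powersetCard.mp hR).2]
  have rhs : ((Y.card - (t - 1) : ℕ) : ℝ) * ∑ Q ∈ powersetCard (t - 1) Y, h Q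
      = ∑ Q ∈ powersetCard (t - 1) Y, ∑ x ∈ Y \ Q, h Q := by
    rw [Finset.mul_sum]
    apply Finset.sum_congr rfl
    intro Q hQ
    obtain ⟨hQY, hQc⟩ := Finset.mem_powersetCard.mp hQ
    rw [Finset.sum_const, nsmul_eq_mul, Finset.card_sdiff_of_subset hQY, hQc]
  rw [lhs, rhs]
  have step : ∑ R ∈ powersetCard t Y, ∑ x ∈ R, h R
      ≤ ∑ R ∈ powersetCard t Y, ∑ x ∈ R, h (R.erase x) := by
    apply Finset.sum_le_sum
    intro R hR
    exact Finset.sum_le_sum fun x hx => hmono R hR x hx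
  refine step.trans_eq ?_
  rw [Finset.sum_sigma' (powersetCard t Y) (fun R => R) (fun R x => h (R.erase x)),
      Finset.sum_sigma' (powersetCard (t-1) Y) (fun Q => Y \ Q) (fun Q x => h Q)]
  apply Finset.sum_bij' (fun p hp => (⟨p.1.erase p.2, p.2⟩ : Σ _ : Finset α, α))
    (fun p hp => (⟨insert p.2 p.1, p.2⟩ : Σ _ : Finset α, α))
  · rintro ⟨R, x⟩ hp
    rw [Finset.mem_sigma] at hp ⊢
    obtain ⟨hR, hx⟩ := hp
    obtain ⟨hRY, hRc⟩ := Finset.mem_powersetCard.mp hR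
    constructor
    · rw [Finset.mem_powersetCard]
      exact ⟨(Finset.erase_subset x R).trans hRY, by rw [Finset.card_erase_of_mem hx, hRc]⟩
    · rw [Finset.mem_sdiff]
      exact ⟨hRY hx, Finset.notMem_erase x R⟩
  · rintro ⟨Q, x⟩ hp
    rw [Finset.mem_sigma] at hp ⊢
    obtain ⟨hQ, hx⟩ := hp
    obtain ⟨hQY, hQc⟩ := Finset.mem_powersetCard.mp hQ
    rw [Finset.mem_sdiff] at hx
    constructor
    · rw [Finset.mem_powersetCard]
      refine ⟨Finset.insert_subset hx.1 hQY, ?_⟩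
      rw [Finset.card_insert_of_notMem hx.2, hQc]
      omega
    · exact Finset.mem_insert_self x Q
  · rintro ⟨R, x⟩ hp
    rw [Finset.mem_sigma] at hp
    simp only [Sigma.mk.inj_iff, heq_eq_eq]
    exact ⟨Finset.insert_erase hp.2, trivial⟩
  · rintro ⟨Q, x⟩ hp
    rw [Finset.mem_sigma, Finset.mem_sdiff] at hp
    simp only [Sigma.mk.inj_iff, heq_eq_eq]
    exact ⟨Finset.erase_insert hp.2.2, trivial⟩
  · rintro ⟨R, x⟩ hp
    rfl


lemma keyA {α : Type*} [DecidableEq α] (f : Finset α → ℝ)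
    (hmono : ∀ A B : Finset α, A ⊆ B → f A ≤ f B)
    (hsub : ∀ A B : Finset α, A ⊆ B → ∀ a ∉ B,
      f (insert a B) - f B ≤ f (insert a A) - f A)
    (S X : Finset α) (t : ℕ) (ht : 1 ≤ t) (htX : t ≤ X.card)
    (a : α) (haX : a ∈ X) (haS : a ∉ S) :
    (t : ℝ) * ∑ R ∈ powersetCard t X, (f (insert a (S ∪ R.erase a)) - f (S ∪ R.erase a))
      ≤ (X.card : ℝ) * ∑ R ∈ (powersetCard t X).filter (fun R => a ∈ R),
          (f (insert a (S ∪ R.erase a)) - f (S ∪ R.erase a)) := by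
  set h : Finset α → ℝ := fun Q => f (insert a (S ∪ Q)) - f (S ∪ Q) with hh
  set Y := X.erase a with hY
  -- A : sum over R containing a equals sum over (t-1)-subsets of Y
  have hA : ∑ R ∈ (powersetCard t X).filter (fun R => a ∈ R),
      (f (insert a (S ∪ R.erase a)) - f (S ∪ R.erase a))
      = ∑ Q ∈ powersetCard (t - 1) Y, h Q := by
    refine Finset.sum_bij' (fun R _ => R.erase a) (fun Q _ => insert a Q) ?_ ?_ ?_ ?_ ?_
    · intro R hR
      rw [Finset.mem_filter, Finset.mem_powersetCard] at hR
      rw [Finset.mem_powersetCard]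
      exact ⟨Finset.erase_subset_erase a hR.1.1,
        by rw [Finset.card_erase_of_mem hR.2, hR.1.2]⟩
    · intro Q hQ
      rw [Finset.mem_powersetCard] at hQ
      rw [Finset.mem_filter, Finset.mem_powersetCard]
      have haQ : a ∉ Q := fun h => Finset.notMem_erase a X (hQ.1 h)
      refine ⟨⟨Finset.insert_subset haX (hQ.1.trans (Finset.erase_subset a X)), ?_⟩,
        Finset.mem_insert_self a Q⟩
      rw [Finset.card_insert_of_notMem haQ, hQ.2]
      omega
    · intro R hR
      rw [Finset.mem_filter] at hR
      exact Finset.insert_erase hR.2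
    · intro Q hQ
      rw [Finset.mem_powersetCard] at hQ
      exact Finset.erase_insert (fun h => Finset.notMem_erase a X (hQ.1 h))
    · intro R hR
      rfl
  -- B : sum over R not containing a
  have hsetB : (powersetCard t X).filter (fun R => ¬ a ∈ R) = powersetCard t Y := by
    ext R
    rw [Finset.mem_filter, Finset.mem_powersetCard, Finset.mem_powersetCard, hY,
      Finset.subset_erase]
    tauto
  have hB : ∑ R ∈ (powersetCard t X).filter (fun R => ¬ a ∈ R),
      (f (insert a (S ∪ R.erase a)) - f (S ∪ R.erase a))
      = ∑ R ∈ powersetCard t Y, h R := by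
    rw [hsetB]
    apply Finset.sum_congr rfl
    intro R hR
    rw [Finset.mem_powersetCard, hY, Finset.subset_erase] at hR
    rw [Finset.erase_eq_of_notMem hR.1.2]
  have hYcard : Y.card = X.card - 1 := Finset.card_erase_of_mem haX
  have hdc := dc Y t ht h ?_
  swap
  · intro Q hQ x hx
    rw [Finset.mem_powersetCard] at hQ
    have haQ : a ∉ S ∪ Q := by
      rw [Finset.mem_union]
      rintro (h' | h')
      · exact haS h'
      · exact Finset.notMem_erase a X (hQ.1 h')
    exact hsub (S ∪ Q.erase x) (S ∪ Q)
      (Finset.union_subset_union_right (Finset.erase_subset x Q)) a haQ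
  have hAnn : 0 ≤ ∑ Q ∈ powersetCard (t - 1) Y, h Q := by
    apply Finset.sum_nonneg
    intro Q _
    have := hmono (S ∪ Q) (insert a (S ∪ Q)) (Finset.subset_insert a (S ∪ Q))
    simp only [hh]
    linarith
  -- numeric combination
  have hcast : ((Y.card - (t - 1) : ℕ) : ℝ) = (X.card : ℝ) - t := by
    have h1 : 1 ≤ X.card := Finset.card_pos.mpr ⟨a, haX⟩
    rw [hYcard]
    have : X.card - 1 - (t - 1) = X.card - t := by omega
    rw [this]
    push_cast [htX]
    ring
  have hsplit := Finset.sum_filter_add_sum_filter_not (powersetCard t X)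
    (fun R => a ∈ R) (fun R => f (insert a (S ∪ R.erase a)) - f (S ∪ R.erase a))
  rw [hA, hB] at hsplit
  rw [hcast] at hdc
  rw [hA, ← hsplit]
  have hexp := mul_add (t : ℝ) (∑ Q ∈ powersetCard (t - 1) Y, h Q)
    (∑ R ∈ powersetCard t Y, h R)
  linarith


/-- The marginal contribution `f_S(X) = f(S ∪ X) - f(S)`. -/
noncomputable def marg {α : Type*} [DecidableEq α] (f : Finset α → ℝ) (S X : Finset α) : ℝ :=
  f (S ∪ X) - f S

/-- The expectation of `g(R)` where `R` is a uniformly random subset of `X` of size `t`. -/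
noncomputable def expUnif {α : Type*} [DecidableEq α] (X : Finset α) (t : ℕ)
    (g : Finset α → ℝ) : ℝ :=
  (∑ R ∈ Finset.powersetCard t X, g R) / (Finset.powersetCard t X).card

/-- key estimate in the filtering lemmas: if every element of `X' ⊆ X`
has expected marginal contribution at least `τ` to `S ∪ (R \ {a})` for `R ∼ U(X)`, then
`E[f_S(R)] ≥ E[f_S(R ∩ X')] ≥ |X'| · (k/(r·|X|)) · τ`. -/
theorem stmt16 {α : Type*} [Fintype α] [DecidableEq α]
    (f : Finset α → ℝ)
    (hmono : ∀ A B : Finset α, A ⊆ B → f A ≤ f B)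
    (hsub : ∀ A B : Finset α, A ⊆ B → ∀ a ∉ B,
      f (insert a B) - f B ≤ f (insert a A) - f A)
    (k r : ℕ) (hk1 : 1 ≤ k) (hkn : k ≤ Fintype.card α) (hr : 1 ≤ r) (hrk : r ∣ k)
    (S : Finset α) (X : Finset α) (hX : k / r ≤ X.card)
    (τ : ℝ) (hτ : 0 ≤ τ)
    (X' : Finset α) (hX'sub : X' ⊆ X)
    (hX' : ∀ a ∈ X',
      τ ≤ expUnif X (k / r)
        (fun R => f (insert a (S ∪ R.erase a)) - f (S ∪ R.erase a))) :
    expUnif X (k / r) (fun R => marg f S (R ∩ X')) ≤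
      expUnif X (k / r) (fun R => marg f S R) ∧
    (X'.card : ℝ) * ((k : ℝ) / (r * X.card)) * τ ≤
      expUnif X (k / r) (fun R => marg f S (R ∩ X')) := by

  set t := k / r with hts
  have hrk' : r ≤ k := Nat.le_of_dvd (by omega) hrk
  have ht1 : 1 ≤ t := by
    rw [hts, Nat.one_le_div_iff (by omega)]
    exact hrk'
  have hN : 0 < (powersetCard t X).card := by
    rw [Finset.card_powersetCard]
    exact Nat.choose_pos hX
  have hNR : (0:ℝ) < ((powersetCard t X).card : ℝ) := by exact_mod_cast hN
  have hn1 : 1 ≤ X.card := le_trans ht1 hX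
  have hnR : (0:ℝ) < (X.card : ℝ) := by exact_mod_cast hn1
  constructor
  · unfold expUnif
    apply div_le_div_of_nonneg_right ?_ hNR.le
    apply Finset.sum_le_sum
    intro R _
    unfold marg
    have := hmono (S ∪ (R ∩ X')) (S ∪ R)
      (Finset.union_subset_union_right (Finset.inter_subset_left))
    linarith
  · -- second part
    by_cases hcase : ∃ a ∈ X', a ∈ S
    · obtain ⟨a, haX', haS⟩ := hcase
      have hzero : expUnif X t
          (fun R => f (insert a (S ∪ R.erase a)) - f (S ∪ R.erase a)) = 0 := by
        unfold expUnif
        have : ∀ R ∈ powersetCard t X,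
            f (insert a (S ∪ R.erase a)) - f (S ∪ R.erase a) = 0 := by
          intro R _
          rw [Finset.insert_eq_self.mpr (Finset.mem_union_left _ haS), sub_self]
        rw [Finset.sum_congr rfl this, Finset.sum_const, smul_zero, zero_div]
      have hτ0 : τ = 0 := le_antisymm (by rw [← hzero]; exact hX' a haX') hτ
      rw [hτ0, mul_zero]
      unfold expUnif
      apply div_nonneg ?_ hNR.le
      apply Finset.sum_nonneg
      intro R _
      unfold marg
      have := hmono S (S ∪ (R ∩ X')) Finset.subset_union_left
      linarith
    · push_neg at hcase
      set g : α → Finset α → ℝ :=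
        fun a R => f (insert a (S ∪ R.erase a)) - f (S ∪ R.erase a) with hg
      -- step 1 : pointwise telescoping
      have step1 : ∀ R ∈ powersetCard t X,
          ∑ a ∈ R ∩ X', g a R ≤ marg f S (R ∩ X') := by
        intro R _
        unfold marg
        exact telescope f hsub S R (R ∩ X') Finset.inter_subset_left
          (fun a ha => hcase a (Finset.mem_inter.mp ha).2)
      -- step 2 : exchange the sums
      have step2 : ∑ R ∈ powersetCard t X, ∑ a ∈ R ∩ X', g a R
          = ∑ a ∈ X', ∑ R ∈ (powersetCard t X).filter (fun R => a ∈ R), g a R := by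
        have h1 : ∀ R : Finset α, ∑ a ∈ R ∩ X', g a R
            = ∑ a ∈ X', if a ∈ R then g a R else 0 := by
          intro R
          rw [Finset.inter_comm, ← Finset.filter_mem_eq_inter, Finset.sum_filter]
        rw [Finset.sum_congr rfl (fun R _ => h1 R), Finset.sum_comm]
        apply Finset.sum_congr rfl
        intro a _
        rw [Finset.sum_filter]
      -- step 3 : per-element lower bound
      have step3 : ∀ a ∈ X',
          (t : ℝ) / X.card * (τ * (powersetCard t X).card)
            ≤ ∑ R ∈ (powersetCard t X).filter (fun R => a ∈ R), g a R := by
        intro a ha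
        have hkey := keyA f hmono hsub S X t ht1 hX a (hX'sub ha) (hcase a ha)
        have hexp : τ * (powersetCard t X).card ≤ ∑ R ∈ powersetCard t X, g a R := by
          have := hX' a ha
          unfold expUnif at this
          rw [le_div_iff₀ hNR] at this
          linarith
        have htn : (0:ℝ) ≤ (t : ℝ) / X.card := by positivity
        calc (t : ℝ) / X.card * (τ * (powersetCard t X).card)
            ≤ (t : ℝ) / X.card * ∑ R ∈ powersetCard t X, g a R :=
              mul_le_mul_of_nonneg_left hexp htn
          _ ≤ ∑ R ∈ (powersetCard t X).filter (fun R => a ∈ R), g a R := by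
              rw [div_mul_eq_mul_div, div_le_iff₀ hnR]
              calc (t:ℝ) * ∑ R ∈ powersetCard t X, g a R
                  ≤ (X.card : ℝ) * ∑ R ∈ (powersetCard t X).filter (fun R => a ∈ R), g a R := hkey
                _ = (∑ R ∈ (powersetCard t X).filter (fun R => a ∈ R), g a R) * X.card := by ring
      -- combine
      have main : (X'.card : ℝ) * ((t : ℝ) / X.card * (τ * (powersetCard t X).card))
          ≤ ∑ R ∈ powersetCard t X, marg f S (R ∩ X') := by
        calc (X'.card : ℝ) * ((t : ℝ) / X.card * (τ * (powersetCard t X).card))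
            = ∑ _a ∈ X', (t : ℝ) / X.card * (τ * (powersetCard t X).card) := by
              rw [Finset.sum_const, nsmul_eq_mul]
          _ ≤ ∑ a ∈ X', ∑ R ∈ (powersetCard t X).filter (fun R => a ∈ R), g a R :=
              Finset.sum_le_sum step3
          _ = ∑ R ∈ powersetCard t X, ∑ a ∈ R ∩ X', g a R := step2.symm
          _ ≤ ∑ R ∈ powersetCard t X, marg f S (R ∩ X') := Finset.sum_le_sum step1
      have hcast : ((k : ℝ) / (r * X.card)) = (t : ℝ) / X.card := by
        have hkr : (t : ℝ) * r = k := by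
          exact_mod_cast congrArg (Nat.cast : ℕ → ℝ) (Nat.div_mul_cancel hrk)
        have hr0 : (r : ℝ) ≠ 0 := by positivity
        field_simp
        linear_combination (-1 : ℝ) * hkr
      rw [hcast]
      unfold expUnif
      rw [le_div_iff₀ hNR]
      calc (X'.card : ℝ) * ((t:ℝ) / X.card) * τ * (powersetCard t X).card
          = (X'.card : ℝ) * ((t : ℝ) / X.card * (τ * (powersetCard t X).card)) := by ring
        _ ≤ ∑ R ∈ powersetCard t X, marg f S (R ∩ X') := main
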